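/- arXiv:2107.01587 — 3 statements merged into one kernel-verified Lean document; each statement's English description precedes it below -/
import Mathlib

section
/- Let G be a locally compact abelian topological group with a Haar measure μ, and let m be a cosine multiplicative functional on L¹(G, μ). Then there exists an even function g ∈ L¹(G, μ) (i.e., g(−x) = g(x) for μ-a.e. x) with m(g) ≠ 0. -/
open MeasureTheory

/-- The cosine convolution `(f ⋆_c g)(x) = ∫ f(y) (g(x+y) + g(x-y))/2 dμ(y)`. -/
noncomputable def cosConv {G : Type*} [AddCommGroup G] [MeasurableSpace G]
    (μ : Measure G) (f g : G → ℂ) : G → ℂ :=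
  fun x => ∫ y, f y * (g (x + y) + g (x - y)) / 2 ∂μ

/-- A cosine multiplicative functional on `L¹(G, μ)`: a nonzero continuous linear
functional `m` with `m(f ⋆_c g) = m(f) m(g)` for all `f, g ∈ L¹(G, μ)`. -/
def IsCosineMulFunctional {G : Type*} [AddCommGroup G] [MeasurableSpace G]
    (μ : Measure G) (m : Lp ℂ 1 μ →L[ℂ] ℂ) : Prop :=
  m ≠ 0 ∧ ∀ (f g : Lp ℂ 1 μ) (h : Integrable (cosConv μ (f : G → ℂ) (g : G → ℂ)) μ),
    m (h.toL1 _) = m f * m g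

/-!
Split an element `f` of `L¹` on which `m` does not vanish into its even and odd parts. By the
invariance of Haar measure under `x ↦ -x`, the cosine convolution of an odd function with anything
is the integral of an odd function, hence zero; multiplicativity then gives `m(odd part) m(f) = 0`,
so `m(even part) = m(f) ≠ 0`.
-/

namespace Function

variable {G E : Type*} [AddGroup G] [NormedAddCommGroup E] [NormedSpace ℝ E]

noncomputable def evenPart (f : G → E) : G → E := fun x => (2 : ℝ)⁻¹ • (f x + f (-x))

noncomputable def oddPart (f : G → E) : G → E := fun x => (2 : ℝ)⁻¹ • (f x - f (-x))

theorem evenPart_even (f : G → E) : (evenPart f).Even := fun x => by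
  simp only [evenPart, neg_neg, add_comm]

theorem oddPart_odd (f : G → E) : (oddPart f).Odd := fun x => by
  simp only [oddPart, neg_neg, ← smul_neg, neg_sub]

theorem evenPart_add_oddPart (f : G → E) : evenPart f + oddPart f = f := by
  funext x
  simp only [Pi.add_apply, evenPart, oddPart]
  module

variable [MeasurableSpace G] [MeasurableNeg G]

theorem Odd.integral_eq_zero {f : G → E} (hf : f.Odd) (μ : Measure G) [μ.IsNegInvariant] :
    ∫ x, f x ∂μ = 0 := by
  have h : ∫ x, f x ∂μ = -∫ x, f x ∂μ := by
    conv_lhs => rw [← integral_neg_eq_self f μ]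
    simp only [hf.eq, integral_neg]
  have h2 : (2 : ℝ) • ∫ x, f x ∂μ = 0 := by
    rw [two_smul]
    nth_rewrite 1 [h]
    exact neg_add_cancel _
  exact (smul_eq_zero.1 h2).resolve_left two_ne_zero

end Function

open Function

section EvenOddParts

variable {G E : Type*} [AddGroup G] [MeasurableSpace G] [MeasurableNeg G]
  [NormedAddCommGroup E] [NormedSpace ℝ E] {μ : Measure G} [μ.IsNegInvariant] {f : G → E}

theorem MeasureTheory.Integrable.evenPart (hf : Integrable f μ) : Integrable (evenPart f) μ :=
  (hf.add hf.comp_neg).smul (2 : ℝ)⁻¹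

theorem MeasureTheory.Integrable.oddPart (hf : Integrable f μ) : Integrable (oddPart f) μ :=
  (hf.sub hf.comp_neg).smul (2 : ℝ)⁻¹

theorem MeasureTheory.Integrable.toL1_evenPart_add_toL1_oddPart (hf : Integrable f μ) :
    hf.evenPart.toL1 _ + hf.oddPart.toL1 _ = hf.toL1 f := by
  rw [← Integrable.toL1_add]
  simp only [evenPart_add_oddPart]

end EvenOddParts

section CosConv

variable {G : Type*} [AddCommGroup G] [MeasurableSpace G] {μ : Measure G}

theorem cosConv_congr_ae_left {f₁ f₂ : G → ℂ} (h : f₁ =ᵐ[μ] f₂) (g : G → ℂ) :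
    cosConv μ f₁ g = cosConv μ f₂ g :=
  funext fun _ => integral_congr_ae (h.mono fun y hy => by simp only [hy])

theorem cosConv_eq_zero_of_odd [MeasurableNeg G] [μ.IsNegInvariant] {f : G → ℂ} (hf : f.Odd)
    (g : G → ℂ) : cosConv μ f g = 0 := by
  funext x
  have hodd : (fun y => f y * (g (x + y) + g (x - y)) / 2).Odd := fun y => by
    simp only [hf.eq, sub_neg_eq_add, ← sub_eq_add_neg]
    ring
  exact hodd.integral_eq_zero μ

theorem IsCosineMulFunctional.apply_eq_zero_of_cosConv_eq_zero {m : Lp ℂ 1 μ →L[ℂ] ℂ}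
    (hm : IsCosineMulFunctional μ m) {f g : Lp ℂ 1 μ} (hfg : cosConv μ f g = 0)
    (hg : m g ≠ 0) : m f = 0 := by
  have hint : Integrable (cosConv μ f g) μ := hfg ▸ integrable_zero G ℂ μ
  have hmul := hm.2 f g hint
  simp only [hfg, Integrable.toL1_zero, map_zero] at hmul
  exact (mul_eq_zero.1 hmul.symm).resolve_right hg

end CosConv

theorem exists_even_ne_zero_general {G : Type*} [AddCommGroup G] [TopologicalSpace G]
    [IsTopologicalAddGroup G] [LocallyCompactSpace G]
    [MeasurableSpace G] [BorelSpace G]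
    (μ : Measure G) [μ.IsAddHaarMeasure] [μ.Regular]
    (m : Lp ℂ 1 μ →L[ℂ] ℂ) (hm : IsCosineMulFunctional μ m) :
    ∃ (g : G → ℂ) (hg : Integrable g μ),
      (∀ᵐ x ∂μ, g (-x) = g x) ∧ m (hg.toL1 g) ≠ 0 := by
  obtain ⟨F, hF⟩ := DFunLike.ne_iff.1 hm.1
  have hf : Integrable (F : G → ℂ) μ := L1.integrable_coeFn F
  have hodd : m (hf.oddPart.toL1 _) = 0 := by
    refine hm.apply_eq_zero_of_cosConv_eq_zero ?_ hF
    rw [cosConv_congr_ae_left hf.oddPart.coeFn_toL1]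
    exact cosConv_eq_zero_of_odd (oddPart_odd _) _
  refine ⟨evenPart F, hf.evenPart, ae_of_all _ (evenPart_even _), ?_⟩
  have hsplit := congrArg m hf.toL1_evenPart_add_toL1_oddPart
  rw [map_add, hodd, add_zero, Integrable.toL1_coeFn] at hsplit
  rwa [hsplit]

/-- Every cosine multiplicative functional on `L¹(G, μ)` is nonzero on
some even integrable function. -/
theorem exists_even_ne_zero {G : Type*} [AddCommGroup G] [TopologicalSpace G]
    [IsTopologicalAddGroup G] [LocallyCompactSpace G] [T2Space G]
    [MeasurableSpace G] [BorelSpace G]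
    (μ : Measure G) [μ.IsAddHaarMeasure] [μ.Regular]
    (m : Lp ℂ 1 μ →L[ℂ] ℂ) (hm : IsCosineMulFunctional μ m) :
    ∃ (g : G → ℂ) (hg : Integrable g μ),
      (∀ᵐ x ∂μ, g (-x) = g x) ∧ m (hg.toL1 g) ≠ 0 :=
  exists_even_ne_zero_general μ m hm
end

section
/- Let y* ∈ [0, ∞) and let (y_n) be a sequence in [0, ∞) that is unbounded. Then for every ε > 0 the sequence n ↦ sup_{x ∈ [0, ε]} |cos(2π y_n x) − cos(2π y* x)| does not converge to zero. -/
open Filter Real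

/-!
Write `a = y n` and `b = y*`. At `x = 1 / (2a)` the function `cos (2π a x)` equals `cos π = -1`,
while for `2|b| ≤ a` the angle `2π b x` lies in `[-π/2, π/2]`, so `cos (2π b x) ≥ 0`. Hence once
`a ≥ 1 / (2ε)` the supremum over `[0, ε]` is at least `1`. If the suprema tended to `0`, the `y n`
would therefore eventually stay below a fixed threshold, and the sequence would be bounded.
-/

lemma abs_cos_sub_cos_le_two (u v : ℝ) : |cos u - cos v| ≤ 2 :=
  (abs_sub _ _).trans (by linarith [abs_cos_le_one u, abs_cos_le_one v])

lemma one_le_abs_cos_sub_cos_inv_two_mul {a b : ℝ} (ha : 0 < a) (hb : 2 * |b| ≤ a) :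
    1 ≤ |cos (2 * π * a * (2 * a)⁻¹) - cos (2 * π * b * (2 * a)⁻¹)| := by
  have hπ : 2 * π * a * (2 * a)⁻¹ = π := by field_simp
  have hquarter : |2 * π * b * (2 * a)⁻¹| ≤ π / 2 := by
    rw [show 2 * π * b * (2 * a)⁻¹ = π * (b / a) by field_simp, abs_mul, abs_of_pos pi_pos,
      abs_div, abs_of_pos ha]
    have : |b| / a ≤ 1 / 2 := by rw [div_le_iff₀ ha]; linarith
    nlinarith [pi_pos]
  have hcos : 0 ≤ cos (2 * π * b * (2 * a)⁻¹) :=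
    cos_nonneg_of_neg_pi_div_two_le_of_le (neg_le_of_abs_le hquarter) (le_of_abs_le hquarter)
  rw [hπ, cos_pi, abs_sub_comm, abs_of_nonneg (by linarith)]
  linarith

lemma one_le_iSup_abs_cos_sub_cos {ε a b : ℝ} (hε : 0 < ε) (ha : (2 * ε)⁻¹ ≤ a)
    (hb : 2 * |b| ≤ a) :
    1 ≤ ⨆ x : Set.Icc (0 : ℝ) ε, |cos (2 * π * a * x) - cos (2 * π * b * x)| := by
  have ha₀ : 0 < a := lt_of_lt_of_le (by positivity) ha
  have hx : (2 * a)⁻¹ ∈ Set.Icc 0 ε := by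
    refine ⟨by positivity, ?_⟩
    rw [inv_le_comm₀ (by positivity) hε]
    rw [mul_inv] at ha
    linarith
  refine (one_le_abs_cos_sub_cos_inv_two_mul ha₀ hb).trans (le_ciSup_of_le ?_ ⟨_, hx⟩ le_rfl)
  exact ⟨2, Set.forall_mem_range.2 fun x => abs_cos_sub_cos_le_two _ _⟩

theorem sup_cos_dist_not_tendsto_zero_general (ystar : ℝ)
    (y : ℕ → ℝ) (hunb : ∀ C : ℝ, ∃ n, C < y n) :
    ∀ ε > (0 : ℝ),
      ¬ Tendsto (fun n => ⨆ x : Set.Icc (0 : ℝ) ε,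
          |Real.cos (2 * π * y n * x) - Real.cos (2 * π * ystar * x)|)
        atTop (nhds 0) := by
  intro ε hε hlim
  have hsmall : ∀ᶠ n in atTop, y n ≤ max (2 * ε)⁻¹ (2 * |ystar|) := by
    filter_upwards [hlim.eventually (gt_mem_nhds one_pos)] with n hn
    by_contra! hlarge
    exact hn.not_ge <| one_le_iSup_abs_cos_sub_cos hε
      ((le_max_left _ _).trans hlarge.le) ((le_max_right _ _).trans hlarge.le)
  obtain ⟨C, hC⟩ := (isBoundedUnder_of_eventually_le hsmall).bddAbove_range
  obtain ⟨n, hn⟩ := hunb C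
  exact hn.not_ge (hC ⟨n, rfl⟩)

/-- If `y* ≥ 0` and `(y_n) ⊂ [0, ∞)` is unbounded, then for every
`ε > 0` the sequence `n ↦ sup_{x ∈ [0, ε]} |cos(2π y_n x) − cos(2π y* x)|` does not
converge to zero. -/
theorem sup_cos_dist_not_tendsto_zero (ystar : ℝ) (hystar : 0 ≤ ystar)
    (y : ℕ → ℝ) (hy : ∀ n, 0 ≤ y n) (hunb : ∀ C : ℝ, ∃ n, C < y n) :
    ∀ ε > (0 : ℝ),
      ¬ Tendsto (fun n => ⨆ x : Set.Icc (0 : ℝ) ε,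
          |Real.cos (2 * π * y n * x) - Real.cos (2 * π * ystar * x)|)
        atTop (nhds 0) :=
  sup_cos_dist_not_tendsto_zero_general ystar y hunb
end

section
/- Let n ≥ 1 be a natural number and consider ℓ¹(ℤ/nℤ) = (ℂ^{ℤ/nℤ}, ‖·‖₁) with counting measure, so that (f ⋆_c g)(x) = Σ_{y ∈ ℤ/nℤ} f(y)·(g(x+y) + g(x−y))/2. For l ∈ {0, 1, …, ⌈(n+1)/2⌉ − 1}, define m_l(f) = Σ_{k=0}^{n−1} f(k)·cos(2πlk/n). Then the functionals m_l are pairwise distinct, each m_l is a cosine multiplicative functional on ℓ¹(ℤ/nℤ), and every cosine multiplicative functional on ℓ¹(ℤ/nℤ) equals m_l for some l ∈ {0, 1, …, ⌈(n+1)/2⌉ − 1}. In particular, Δ(ℓ¹(ℤ/nℤ), ⋆_c) has exactly ⌈(n+1)/2⌉ elements, where ⌈·⌉ is the ceiling function. -/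
open MeasureTheory Real

/-- `ℤ/nℤ` carries the discrete (i.e. `⊤`) σ-algebra. -/
instance (n : ℕ) : MeasurableSpace (ZMod n) := ⊤

/-!
On `ℓ¹` of a finite group every continuous functional is `m f = ∑ k, f k * φ k` with
`φ k = m δ_k`, and `m` is cosine multiplicative iff `φ ≠ 0` solves d'Alembert's equation
`φ (x + y) + φ (x - y) = 2 φ x φ y`. On `ℤ/nℤ` the equation at `y = 1` is the Chebyshev
recursion, so `φ k = cos (k θ)` with `cos θ = φ 1`; then `φ n = φ 0 = 1` forces `n θ ∈ 2πℤ`, and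
the balanced residue mod `n` of the integer `n θ / 2π` gives `l ∈ {0, …, n / 2}`. The values
`cos (2π l / n)` at `k = 1` separate these `l`, and `n / 2 + 1 = ⌈(n + 1) / 2⌉`.
-/

section LpCount

variable {α : Type*} [MeasurableSpace α] [DiscreteMeasurableSpace α] [Fintype α] {p : ENNReal}

variable (α p) in
noncomputable def Lp.countEquiv : Lp ℂ p (Measure.count : Measure α) ≃ₗ[ℂ] (α → ℂ) where
  toFun f := f
  invFun f := MemLp.toLp f .of_discrete
  map_add' f g := funext (Measure.ae_count_iff.mp (Lp.coeFn_add f g))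
  map_smul' c f := funext (Measure.ae_count_iff.mp (Lp.coeFn_smul c f))
  left_inv f := Lp.toLp_coeFn f .of_discrete
  right_inv _ := funext (Measure.ae_count_iff.mp (MemLp.coeFn_toLp _))

@[simp]
lemma Lp.countEquiv_apply (f : Lp ℂ p (Measure.count : Measure α)) :
    Lp.countEquiv α p f = f :=
  rfl

instance : FiniteDimensional ℂ (Lp ℂ p (Measure.count : Measure α)) :=
  (Lp.countEquiv α p).symm.finiteDimensional

variable (p) in
noncomputable def Lp.countSingle [DecidableEq α] (k : α) : Lp ℂ p (Measure.count : Measure α) :=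
  (Lp.countEquiv α p).symm (Pi.single k 1)

@[simp]
lemma Lp.coe_countSingle [DecidableEq α] (k : α) : (Lp.countSingle p k : α → ℂ) = Pi.single k 1 :=
  (Lp.countEquiv α p).apply_symm_apply _

variable [Fact (1 ≤ p)]

variable (p) in
noncomputable def sumFunctional (φ : α → ℂ) : Lp ℂ p (Measure.count : Measure α) →L[ℂ] ℂ :=
  LinearMap.toContinuousLinearMap
    (Fintype.linearCombination ℂ φ ∘ₗ (Lp.countEquiv α p).toLinearMap)

lemma sumFunctional_apply (φ : α → ℂ) (f : Lp ℂ p (Measure.count : Measure α)) :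
    sumFunctional p φ f = ∑ k, f k * φ k :=
  rfl

variable [DecidableEq α]

@[simp]
lemma sumFunctional_countSingle (φ : α → ℂ) (k : α) :
    sumFunctional p φ (Lp.countSingle p k) = φ k := by
  simp [sumFunctional_apply, Pi.single_apply]

lemma sumFunctional_injective : Function.Injective (sumFunctional p : (α → ℂ) → _) :=
  fun φ ψ h => funext fun k => by simpa using congr($h (Lp.countSingle p k))

lemma eq_sumFunctional (m : Lp ℂ p (Measure.count : Measure α) →L[ℂ] ℂ) :
    m = sumFunctional p (fun k => m (Lp.countSingle p k)) := by
  ext f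
  have := LinearMap.pi_apply_eq_sum_univ ((m : _ →ₗ[ℂ] ℂ) ∘ₗ (Lp.countEquiv α p).symm.toLinearMap)
    (Lp.countEquiv α p f)
  rw [LinearMap.comp_apply, LinearEquiv.coe_coe, LinearEquiv.symm_apply_apply] at this
  have hs : ∀ k : α, (fun j : α => if k = j then (1 : ℂ) else 0) = Pi.single k 1 := fun k => by
    ext j; simp [Pi.single_apply, eq_comm]
  simpa [sumFunctional_apply, mul_comm, hs, Lp.countSingle] using this

end LpCount

section DAlembert

variable {G : Type*} [AddCommGroup G]

def SolvesDAlembert (φ : G → ℂ) : Prop :=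
  ∀ x y, φ (x + y) + φ (x - y) = 2 * φ x * φ y

variable {φ : G → ℂ}

lemma SolvesDAlembert.map_zero (h : SolvesDAlembert φ) (hφ : φ ≠ 0) : φ 0 = 1 := by
  obtain ⟨x, hx⟩ := Function.ne_iff.mp hφ
  have hx0 := h x 0
  rw [add_zero, sub_zero] at hx0
  have : φ x * (φ 0 - 1) = 0 := by linear_combination -hx0 / 2
  exact sub_eq_zero.mp ((mul_eq_zero.mp this).resolve_left hx)

lemma SolvesDAlembert.exists_nsmul_eq_cos (h : SolvesDAlembert φ) (h0 : φ 0 = 1) (g : G) :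
    ∃ θ : ℂ, ∀ k : ℕ, φ (k • g) = Complex.cos (k * θ) := by
  obtain ⟨θ, hθ⟩ := Complex.cos_surjective (φ g)
  refine ⟨θ, fun k => ?_⟩
  induction k using Nat.twoStepInduction with
  | zero => simp [h0]
  | one => simp [hθ]
  | more k ih₀ ih₁ =>
    have hrec := h ((k + 1) • g) g
    rw [← succ_nsmul, succ_nsmul g k, add_sub_cancel_right, ← succ_nsmul, ih₀, ih₁, ← hθ] at hrec
    have hcos : Complex.cos ((k + 2 : ℕ) * θ) + Complex.cos (k * θ) =
        2 * Complex.cos ((k + 1 : ℕ) * θ) * Complex.cos θ := by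
      rw [show ((k + 2 : ℕ) : ℂ) * θ = (k + 1 : ℕ) * θ + θ by push_cast; ring,
        show (k : ℂ) * θ = (k + 1 : ℕ) * θ - θ by push_cast; ring, Complex.cos_add, Complex.cos_sub]
      ring
    linear_combination hrec - hcos

end DAlembert

section CosConv

variable {G : Type*} [AddCommGroup G] [MeasurableSpace G] [DiscreteMeasurableSpace G] [Fintype G]

lemma sum_cosConv_count_mul (f g φ : G → ℂ) :
    ∑ x, cosConv Measure.count f g x * φ x =
      ∑ y, ∑ u, f y * g u * ((φ (u - y) + φ (u + y)) / 2) := by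
  simp only [cosConv, integral_count, Finset.sum_mul]
  rw [Finset.sum_comm]
  refine Finset.sum_congr rfl fun y _ => ?_
  have h₁ : ∑ x, f y * g (x + y) / 2 * φ x = ∑ u, f y * g u / 2 * φ (u - y) :=
    Fintype.sum_equiv (Equiv.addRight y) _ _ fun x => by simp
  have h₂ : ∑ x, f y * g (x - y) / 2 * φ x = ∑ u, f y * g u / 2 * φ (u + y) :=
    Fintype.sum_equiv (Equiv.subRight y) _ _ fun x => by simp
  calc ∑ x, f y * (g (x + y) + g (x - y)) / 2 * φ x
      = ∑ x, (f y * g (x + y) / 2 * φ x + f y * g (x - y) / 2 * φ x) :=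
        Finset.sum_congr rfl fun x _ => by ring
    _ = _ := by
      rw [Finset.sum_add_distrib, h₁, h₂, ← Finset.sum_add_distrib]
      exact Finset.sum_congr rfl fun u _ => by ring

variable [DecidableEq G]

lemma isCosineMulFunctional_sumFunctional_iff (φ : G → ℂ) :
    IsCosineMulFunctional Measure.count (sumFunctional 1 φ) ↔ φ ≠ 0 ∧ SolvesDAlembert φ := by
  have hconv : ∀ (f g : Lp ℂ 1 (Measure.count : Measure G))
      (h : Integrable (cosConv Measure.count (f : G → ℂ) g) Measure.count),
      sumFunctional 1 φ (h.toL1 _) = ∑ y, ∑ u, f y * g u * ((φ (u - y) + φ (u + y)) / 2) := by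
    intro f g h
    rw [sumFunctional_apply, ← sum_cosConv_count_mul]
    exact Finset.sum_congr rfl fun k _ => by rw [Measure.ae_count_iff.mp h.coeFn_toL1 k]
  have hne : sumFunctional 1 φ ≠ 0 ↔ φ ≠ 0 :=
    sumFunctional_injective.ne_iff' (by ext; simp [sumFunctional_apply])
  refine ⟨fun ⟨hm0, hmul⟩ => ⟨hne.mp hm0, fun x y => ?_⟩,
    fun ⟨hφ, hφd⟩ => ⟨hne.mpr hφ, fun f g h => ?_⟩⟩
  · have := hmul (Lp.countSingle 1 y) (Lp.countSingle 1 x) .of_finite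
    rw [hconv] at this
    simp only [Lp.coe_countSingle, Pi.single_apply, mul_ite, mul_one, mul_zero, ite_mul, one_mul,
      zero_mul, Finset.sum_ite_eq', Finset.mem_univ, ↓reduceIte, sumFunctional_countSingle] at this
    linear_combination 2 * this
  · rw [hconv, sumFunctional_apply, sumFunctional_apply, Finset.sum_mul_sum]
    refine Finset.sum_congr rfl fun y _ => Finset.sum_congr rfl fun u _ => ?_
    rw [add_comm, hφd u y]
    ring

end CosConv

section ZModCos

variable {n : ℕ}

instance : DiscreteMeasurableSpace (ZMod n) := ⟨fun _ => MeasurableSpace.measurableSet_top⟩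

noncomputable def zmodCos (n l : ℕ) (k : ZMod n) : ℂ := (Real.cos (2 * π * l * k.val / n) : ℂ)

lemma zmodCos_zero (l : ℕ) : zmodCos n l 0 = 1 := by
  simp [zmodCos]

lemma zmodCos_injOn : Set.InjOn (zmodCos n) (Set.Iic (n / 2)) := by
  intro l hl l' hl' h
  obtain hn | hn := le_or_gt n 1
  · simp only [Set.mem_Iic] at hl hl'
    omega
  have : Fact (1 < n) := ⟨hn⟩
  have h1 := congrFun h 1
  simp only [zmodCos, ZMod.val_one, Nat.cast_one, mul_one, Complex.ofReal_inj] at h1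
  have hnR : (0 : ℝ) < n := by exact_mod_cast zero_lt_one.trans hn
  have hmem : ∀ j ∈ Set.Iic (n / 2), 2 * π * j / n ∈ Set.Icc 0 π := fun j hj => by
    have : 2 * (j : ℝ) ≤ n := by exact_mod_cast (by have := Set.mem_Iic.mp hj; omega : 2 * j ≤ n)
    refine ⟨by positivity, ?_⟩
    rw [div_le_iff₀ hnR]
    nlinarith [Real.pi_pos]
  have := Real.injOn_cos (hmem l hl) (hmem l' hl') h1
  field_simp at this
  exact_mod_cast this

variable [NeZero n]

lemma Real.cos_two_pi_mul_div_of_modEq (a : ℤ) {b b' : ℤ} (h : b ≡ b' [ZMOD n]) :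
    Real.cos (2 * π * a * b / n) = Real.cos (2 * π * a * b' / n) := by
  obtain ⟨q, hq⟩ := h.dvd
  have hn : (n : ℝ) ≠ 0 := Nat.cast_ne_zero.mpr (NeZero.ne n)
  rw [show (b' : ℝ) = b + n * q by rw [← sub_eq_iff_eq_add']; exact_mod_cast hq,
    show 2 * π * a * (b + n * q) / n = 2 * π * a * b / n + (a * q : ℤ) * (2 * π) by
      push_cast; field_simp,
    Real.cos_add_int_mul_two_pi]

lemma zmodCos_intCast (l : ℕ) (j : ℤ) : zmodCos n l j = Real.cos (2 * π * l * j / n) := by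
  rw [zmodCos, ← Int.cast_natCast (R := ℝ) (ZMod.val _), ZMod.val_intCast, ← Int.cast_natCast l,
    Real.cos_two_pi_mul_div_of_modEq _ (Int.mod_modEq j n)]

lemma solvesDAlembert_zmodCos (l : ℕ) : SolvesDAlembert (zmodCos n l) := by
  intro x y
  obtain ⟨a, rfl⟩ := ZMod.intCast_surjective x
  obtain ⟨b, rfl⟩ := ZMod.intCast_surjective y
  rw [← Int.cast_add, ← Int.cast_sub, zmodCos_intCast, zmodCos_intCast, zmodCos_intCast,
    zmodCos_intCast]
  simp only [Int.cast_add, Int.cast_sub, mul_add, mul_sub, add_div, sub_div, Real.cos_add,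
    Real.cos_sub]
  push_cast
  ring

lemma Real.exists_le_half_cos_two_pi_mul_div_eq (m : ℤ) :
    ∃ l : ℕ, l ≤ n / 2 ∧ ∀ v : ℕ, Real.cos (2 * π * m * v / n) = Real.cos (2 * π * l * v / n) := by
  have hn := Nat.pos_of_neZero n
  obtain ⟨l, hl, hml⟩ : ∃ l : ℕ, l ≤ n / 2 ∧ (m ≡ l [ZMOD n] ∨ m ≡ -l [ZMOD n]) := by
    refine ⟨(m.bmod n).natAbs, ?_, ?_⟩
    · have := Int.le_bmod (x := m) hn
      have := Int.bmod_lt (x := m) hn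
      omega
    · have hmod : m ≡ m.bmod n [ZMOD n] := Int.bmod_emod.symm
      rcases Int.natAbs_eq (m.bmod n) with h | h
      exacts [.inl (h ▸ hmod), .inr (h ▸ hmod)]
  refine ⟨l, hl, fun v => ?_⟩
  rw [mul_right_comm (2 * π) (m : ℝ), mul_right_comm (2 * π) (l : ℝ),
    ← Int.cast_natCast (R := ℝ) v]
  rcases hml with hml | hml
  · rw [Real.cos_two_pi_mul_div_of_modEq _ hml, Int.cast_natCast (R := ℝ) l]
  · rw [Real.cos_two_pi_mul_div_of_modEq _ hml, Int.cast_neg, Int.cast_natCast (R := ℝ) l,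
      mul_neg, neg_div, Real.cos_neg]

lemma SolvesDAlembert.exists_eq_zmodCos {φ : ZMod n → ℂ} (h : SolvesDAlembert φ) (hφ : φ ≠ 0) :
    ∃ l ≤ n / 2, φ = zmodCos n l := by
  obtain ⟨θ, hθ⟩ := h.exists_nsmul_eq_cos (h.map_zero hφ) 1
  obtain ⟨m, hm⟩ : ∃ m : ℤ, m * (2 * π) = n * θ := by
    rw [← Complex.cos_eq_one_iff, ← hθ, nsmul_one, ZMod.natCast_self, h.map_zero hφ]
  obtain ⟨l, hl, hcos⟩ := Real.exists_le_half_cos_two_pi_mul_div_eq (n := n) m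
  refine ⟨l, hl, funext fun k => ?_⟩
  have hn : (n : ℂ) ≠ 0 := Nat.cast_ne_zero.mpr (NeZero.ne n)
  have hk : φ k = Complex.cos (k.val * θ) := by simpa using hθ k.val
  have hθm : θ = m * (2 * π) / n := eq_div_of_mul_eq hn ((mul_comm θ n).trans hm.symm)
  rw [hk, zmodCos, ← hcos, hθm]
  push_cast
  ring_nf

lemma isCosineMulFunctional_iff_exists_zmodCos
    (m : Lp ℂ 1 (Measure.count : Measure (ZMod n)) →L[ℂ] ℂ) :
    IsCosineMulFunctional Measure.count m ↔ ∃ l ≤ n / 2, m = sumFunctional 1 (zmodCos n l) := by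
  constructor
  · intro hm
    rw [eq_sumFunctional m, isCosineMulFunctional_sumFunctional_iff] at hm
    obtain ⟨l, hl, hφ⟩ := hm.2.exists_eq_zmodCos hm.1
    exact ⟨l, hl, hφ ▸ eq_sumFunctional m⟩
  · rintro ⟨l, -, rfl⟩
    refine (isCosineMulFunctional_sumFunctional_iff _).mpr ⟨?_, solvesDAlembert_zmodCos l⟩
    exact Function.ne_iff.mpr ⟨0, by simp [zmodCos_zero]⟩

end ZModCos

lemma Nat.ceil_add_one_div_two (n : ℕ) : ⌈((n : ℚ) + 1) / 2⌉₊ = n / 2 + 1 := by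
  rw [Nat.ceil_eq_iff (by omega), Nat.add_sub_cancel, lt_div_iff₀ two_pos, div_le_iff₀ two_pos]
  rcases Nat.even_or_odd' n with ⟨q, rfl | rfl⟩ <;> constructor <;> norm_num [Nat.mul_add_div] <;>
    linarith

/-- For `n ≥ 1`, the functionals `m_l(f) = Σ_{k} f(k) cos(2πlk/n)`,
`l ∈ {0, …, ⌈(n+1)/2⌉ − 1}`, are pairwise distinct cosine multiplicative functionals on
`ℓ¹(ℤ/nℤ) = L¹(ℤ/nℤ, count)`, and every cosine multiplicative functional is one of them;
in particular `Δ(ℓ¹(ℤ/nℤ), ⋆_c)` has exactly `⌈(n+1)/2⌉` elements. -/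
theorem cosStructureSpace_zmod (n : ℕ) [NeZero n] :
    ∃ F : Fin ⌈((n : ℚ) + 1) / 2⌉₊ →
        (Lp ℂ 1 (Measure.count : Measure (ZMod n)) →L[ℂ] ℂ),
      (∀ (l : Fin ⌈((n : ℚ) + 1) / 2⌉₊) (f : Lp ℂ 1 (Measure.count : Measure (ZMod n))),
        F l f = ∑ k : ZMod n,
          (f : ZMod n → ℂ) k * (Real.cos (2 * π * (l : ℕ) * (ZMod.val k) / n) : ℂ)) ∧
      Function.Injective F ∧
      (∀ l, IsCosineMulFunctional Measure.count (F l)) ∧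
      (∀ m : Lp ℂ 1 (Measure.count : Measure (ZMod n)) →L[ℂ] ℂ,
        IsCosineMulFunctional Measure.count m → ∃ l, m = F l) ∧
      Nat.card {m : Lp ℂ 1 (Measure.count : Measure (ZMod n)) →L[ℂ] ℂ //
        IsCosineMulFunctional Measure.count m} = ⌈((n : ℚ) + 1) / 2⌉₊ := by
  rw [Nat.ceil_add_one_div_two]
  set F : Fin (n / 2 + 1) → (Lp ℂ 1 (Measure.count : Measure (ZMod n)) →L[ℂ] ℂ) :=
    fun l => sumFunctional 1 (zmodCos n l)
  have hF : Function.Injective F := sumFunctional_injective.comp fun l l' h =>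
    Fin.ext (zmodCos_injOn (Nat.lt_succ_iff.mp l.2) (Nat.lt_succ_iff.mp l'.2) h)
  have hcos (l) : IsCosineMulFunctional Measure.count (F l) :=
    (isCosineMulFunctional_iff_exists_zmodCos _).mpr ⟨l, Nat.lt_succ_iff.mp l.2, rfl⟩
  have hsurj (m) (hm : IsCosineMulFunctional Measure.count m) : ∃ l, m = F l := by
    obtain ⟨l, hl, rfl⟩ := (isCosineMulFunctional_iff_exists_zmodCos m).mp hm
    exact ⟨⟨l, Nat.lt_succ_of_le hl⟩, rfl⟩
  refine ⟨F, fun l f => rfl, hF, hcos, hsurj, ?_⟩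
  rw [← Nat.card_fin (n / 2 + 1)]
  refine (Nat.card_eq_of_bijective (fun l => ⟨F l, hcos l⟩)
    ⟨fun l l' h => hF (congrArg Subtype.val h), ?_⟩).symm
  rintro ⟨m, hm⟩
  obtain ⟨l, rfl⟩ := hsurj m hm
  exact ⟨l, rfl⟩
end
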